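/- Let p : [0,∞) → ℝ be C¹ with p(0)=0 and p'>0 on (0,∞), let H be its Helmholtz function, suppose H − a̲·p and ā·p − H are convex for some 0 < a̲ < ā, and define E(ϱ|r) = H(ϱ) − H'(r)(ϱ−r) − H(r). Then for every 0 < a < b < ∞ there exists c = c(a,b) > 0 such that for all ϱ ∈ [0,∞) and all r ∈ [a,b]: E(ϱ|r) ≥ c·( 1 + ϱ + p(ϱ) ) whenever ϱ ∉ [a/2, 2b], and E(ϱ|r) ≥ c·(ϱ−r)² whenever ϱ ∈ [a/2, 2b]. -/

import Mathlib

/-!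
On `(0, ∞)` one has `H' = ∫₁^ϱ p/z² + p/ϱ` and `H'' = p'/ϱ > 0`, so `E(·|r)` is the Bregman
divergence of a strictly convex function and obeys the three-point identity
`E(x|r) = E(x|y) + E(y|r) + (H'(y) - H'(r)) (x - y)`; moreover `E(0|r) = p(r)` because `H(0) = 0`.
On the window `[a/2, 2b]` the bound `p'/ϱ ≥ μ > 0` gives `E(x|r) ≥ μ/2 (x - r)²`.
With `y = a/2`, the identity shows that left of `a/2` the energy only grows, while `1 + ϱ + p(ϱ)`
stays bounded. With `y = 2b`, it shows that right of `2b` the energy grows at least linearly, with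
slope `H'(2b) - H'(b) > 0`; there `p(ϱ)` is controlled through the convexity of `H - a̲ p`, which
says `a̲ E_p(x|b) ≤ E_H(x|b)`, and `E_H(x|b) ≤ E_H(x|r)` for `r ≤ b ≤ x`.
-/

open Set

/-- `relEnergy f r x` is `E(x|r)`: the reference state comes first. -/
noncomputable def relEnergy (f : ℝ → ℝ) (r x : ℝ) : ℝ := f x - deriv f r * (x - r) - f r

theorem relEnergy_eq_add (f : ℝ → ℝ) (r y x : ℝ) :
    relEnergy f r x = relEnergy f y x + relEnergy f r y + (deriv f y - deriv f r) * (x - y) := by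
  unfold relEnergy; ring

@[simp]
theorem relEnergy_sq (r x : ℝ) : relEnergy (fun x => x ^ 2) r x = (x - r) ^ 2 := by
  simp only [relEnergy, deriv_pow_field]
  ring

theorem ConvexOn.relEnergy_nonneg {S : Set ℝ} {f : ℝ → ℝ} (hf : ConvexOn ℝ S f)
    {r x : ℝ} (hr : r ∈ S) (hx : x ∈ S) (hd : DifferentiableAt ℝ f r) :
    0 ≤ relEnergy f r x := by
  unfold relEnergy
  rcases lt_trichotomy r x with h | rfl | h
  · have := hf.deriv_le_slope hr hx h hd
    rw [slope_def_field, le_div_iff₀ (sub_pos.2 h)] at this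
    linarith
  · simp
  · have := hf.slope_le_deriv hx hr h hd
    rw [slope_def_field, div_le_iff₀ (sub_pos.2 h)] at this
    linarith

theorem ConvexOn.mul_relEnergy_le {S : Set ℝ} {f g : ℝ → ℝ} {c r x : ℝ}
    (hfg : ConvexOn ℝ S (fun x => f x - c * g x)) (hr : r ∈ S) (hx : x ∈ S)
    (hf : DifferentiableAt ℝ f r) (hg : DifferentiableAt ℝ g r) :
    c * relEnergy g r x ≤ relEnergy f r x := by
  have h := hfg.relEnergy_nonneg hr hx (hf.sub (hg.const_mul c))
  rw [relEnergy, deriv_fun_sub hf (hg.const_mul c), deriv_const_mul c hg] at h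
  unfold relEnergy
  linarith

theorem mul_sq_le_relEnergy {s : Set ℝ} {f : ℝ → ℝ} {μ r x : ℝ} (hs : Convex ℝ s)
    (hd : ∀ x ∈ s, DifferentiableAt ℝ f x)
    (hmono : MonotoneOn (fun x => deriv f x - μ * x) s)
    (hr : r ∈ s) (hx : x ∈ s) : μ / 2 * (x - r) ^ 2 ≤ relEnergy f r x := by
  have hg : ∀ x ∈ s, HasDerivAt (fun x => f x - μ / 2 * x ^ 2) (deriv f x - μ * x) x := by
    intro x hx
    refine ((hd x hx).hasDerivAt.fun_sub ((hasDerivAt_pow 2 x).const_mul (μ / 2))).congr_deriv ?_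
    norm_num
    ring
  have hconv : ConvexOn ℝ s (fun x => f x - μ / 2 * x ^ 2) := by
    refine MonotoneOn.convexOn_of_deriv hs
      (fun x hx => (hg x hx).continuousAt.continuousWithinAt)
      (fun x hx => (hg x (interior_subset hx)).differentiableAt.differentiableWithinAt) ?_
    refine (hmono.mono interior_subset).congr fun x hx => ?_
    exact ((hg x (interior_subset hx)).deriv).symm
  simpa using hconv.mul_relEnergy_le hr hx (hd r hr) (differentiableAt_pow 2)

section Helmholtz

variable {p H : ℝ → ℝ}

theorem hasDerivAt_integral_div_sq (hpc : ContinuousOn p (Ioi 0)) {s : ℝ} (hs : 0 < s) :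
    HasDerivAt (fun x => ∫ z in (1 : ℝ)..x, p z / z ^ 2) (p s / s ^ 2) s := by
  have hcont : ContinuousOn (fun z => p z / z ^ 2) (Ioi 0) :=
    hpc.div (by fun_prop) fun z hz => pow_ne_zero 2 (ne_of_gt hz)
  have hint : IntervalIntegrable (fun z => p z / z ^ 2) MeasureTheory.volume 1 s :=
    (hcont.mono fun z hz => lt_of_lt_of_le (lt_min one_pos hs) hz.1).intervalIntegrable
  exact intervalIntegral.integral_hasDerivAt_right hint
    (hcont.stronglyMeasurableAtFilter isOpen_Ioi s hs) (hcont.continuousAt (Ioi_mem_nhds hs))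

theorem hasDerivAt_helmholtz (hpc : ContinuousOn p (Ioi 0))
    (hH : ∀ ϱ > (0 : ℝ), H ϱ = ϱ * ∫ z in (1 : ℝ)..ϱ, p z / z ^ 2) {s : ℝ} (hs : 0 < s) :
    HasDerivAt H ((∫ z in (1 : ℝ)..s, p z / z ^ 2) + p s / s) s := by
  have hH_eq : H =ᶠ[nhds s] fun x => x * ∫ z in (1 : ℝ)..x, p z / z ^ 2 :=
    Filter.eventuallyEq_of_mem (Ioi_mem_nhds hs) hH
  refine (((hasDerivAt_id s).mul (hasDerivAt_integral_div_sq hpc hs)).congr_of_eventuallyEq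
    hH_eq).congr_deriv ?_
  simp only [id]
  field_simp

theorem hasDerivAt_deriv_helmholtz (hp : ContDiffOn ℝ 1 p (Ici 0))
    (hH : ∀ ϱ > (0 : ℝ), H ϱ = ϱ * ∫ z in (1 : ℝ)..ϱ, p z / z ^ 2) {s : ℝ} (hs : 0 < s) :
    HasDerivAt (deriv H) (deriv p s / s) s := by
  have hpc : ContinuousOn p (Ioi 0) := hp.continuousOn.mono Ioi_subset_Ici_self
  have hpd : HasDerivAt p (deriv p s) s :=
    ((hp.differentiableOn one_ne_zero s hs.le).differentiableAt (Ici_mem_nhds hs)).hasDerivAt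
  have hderiv : deriv H =ᶠ[nhds s] fun x => (∫ z in (1 : ℝ)..x, p z / z ^ 2) + p x / x :=
    Filter.eventuallyEq_of_mem (Ioi_mem_nhds hs) fun x hx =>
      (hasDerivAt_helmholtz hpc hH hx).deriv
  refine (((hasDerivAt_integral_div_sq hpc hs).add
    (hpd.div (hasDerivAt_id s) hs.ne')).congr_of_eventuallyEq hderiv).congr_deriv ?_
  simp only [id]
  field_simp
  ring

theorem strictMonoOn_deriv_helmholtz (hp : ContDiffOn ℝ 1 p (Ici 0))
    (hp' : ∀ ϱ > (0 : ℝ), 0 < deriv p ϱ)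
    (hH : ∀ ϱ > (0 : ℝ), H ϱ = ϱ * ∫ z in (1 : ℝ)..ϱ, p z / z ^ 2) :
    StrictMonoOn (deriv H) (Ioi 0) := by
  refine strictMonoOn_of_deriv_pos (convex_Ioi 0)
    (fun x hx => (hasDerivAt_deriv_helmholtz hp hH hx).continuousAt.continuousWithinAt) ?_
  intro x hx
  rw [interior_Ioi] at hx
  rw [(hasDerivAt_deriv_helmholtz hp hH hx).deriv]
  exact div_pos (hp' x hx) hx

theorem strictMonoOn_Ici_of_deriv_pos (hpc : ContinuousOn p (Ici 0))
    (hp' : ∀ ϱ > (0 : ℝ), 0 < deriv p ϱ) : StrictMonoOn p (Ici 0) :=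
  strictMonoOn_of_deriv_pos (convex_Ici 0) hpc fun x hx => hp' x (by simpa using hx)

theorem nonneg_of_map_zero_of_deriv_pos (hpc : ContinuousOn p (Ici 0)) (hp0 : p 0 = 0)
    (hp' : ∀ ϱ > (0 : ℝ), 0 < deriv p ϱ) {x : ℝ} (hx : 0 ≤ x) : 0 ≤ p x :=
  hp0 ▸ (strictMonoOn_Ici_of_deriv_pos hpc hp').monotoneOn (mem_Ici.2 le_rfl) (mem_Ici.2 hx) hx

theorem relEnergy_helmholtz_zero (hpc : ContinuousOn p (Ioi 0))
    (hH : ∀ ϱ > (0 : ℝ), H ϱ = ϱ * ∫ z in (1 : ℝ)..ϱ, p z / z ^ 2) (hH0 : H 0 = 0)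
    {r : ℝ} (hr : 0 < r) : relEnergy H r 0 = p r := by
  rw [relEnergy, (hasDerivAt_helmholtz hpc hH hr).deriv, hH0, hH r hr]
  field_simp
  ring

theorem relEnergy_helmholtz_nonneg (hp : ContDiffOn ℝ 1 p (Ici 0)) (hp0 : p 0 = 0)
    (hp' : ∀ ϱ > (0 : ℝ), 0 < deriv p ϱ)
    (hH : ∀ ϱ > (0 : ℝ), H ϱ = ϱ * ∫ z in (1 : ℝ)..ϱ, p z / z ^ 2) (hH0 : H 0 = 0)
    {r x : ℝ} (hr : 0 < r) (hx : 0 ≤ x) : 0 ≤ relEnergy H r x := by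
  have hpc : ContinuousOn p (Ioi 0) := hp.continuousOn.mono Ioi_subset_Ici_self
  rcases hx.eq_or_lt with rfl | hx
  · rw [relEnergy_helmholtz_zero hpc hH hH0 hr]
    exact nonneg_of_map_zero_of_deriv_pos hp.continuousOn hp0 hp' hr.le
  · simpa using mul_sq_le_relEnergy (μ := 0) (convex_Ioi 0)
      (fun x hx => (hasDerivAt_helmholtz hpc hH hx).differentiableAt)
      (by simpa using (strictMonoOn_deriv_helmholtz hp hp' hH).monotoneOn) hr hx

theorem relEnergy_add_mul_le_relEnergy_helmholtz (hp : ContDiffOn ℝ 1 p (Ici 0)) (hp0 : p 0 = 0)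
    (hp' : ∀ ϱ > (0 : ℝ), 0 < deriv p ϱ)
    (hH : ∀ ϱ > (0 : ℝ), H ϱ = ϱ * ∫ z in (1 : ℝ)..ϱ, p z / z ^ 2) (hH0 : H 0 = 0)
    (r : ℝ) {y x : ℝ} (hy : 0 < y) (hx : 0 ≤ x) :
    relEnergy H r y + (deriv H y - deriv H r) * (x - y) ≤ relEnergy H r x := by
  rw [relEnergy_eq_add H r y x]
  linarith [relEnergy_helmholtz_nonneg hp hp0 hp' hH hH0 hy hx]

theorem relEnergy_helmholtz_le_of_le (hp : ContDiffOn ℝ 1 p (Ici 0)) (hp0 : p 0 = 0)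
    (hp' : ∀ ϱ > (0 : ℝ), 0 < deriv p ϱ)
    (hH : ∀ ϱ > (0 : ℝ), H ϱ = ϱ * ∫ z in (1 : ℝ)..ϱ, p z / z ^ 2) (hH0 : H 0 = 0)
    {r y x : ℝ} (hr : 0 < r) (hry : r ≤ y) (hyx : y ≤ x) :
    relEnergy H y x ≤ relEnergy H r x := by
  have hy : 0 < y := hr.trans_le hry
  have hEry := relEnergy_helmholtz_nonneg hp hp0 hp' hH hH0 hr hy.le
  have hmono := (strictMonoOn_deriv_helmholtz hp hp' hH).monotoneOn hr hy hry
  rw [relEnergy_eq_add H r y x]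
  nlinarith

theorem exists_pos_monotoneOn_deriv_helmholtz_sub (hp : ContDiffOn ℝ 1 p (Ici 0))
    (hp' : ∀ ϱ > (0 : ℝ), 0 < deriv p ϱ)
    (hH : ∀ ϱ > (0 : ℝ), H ϱ = ϱ * ∫ z in (1 : ℝ)..ϱ, p z / z ^ 2)
    {A B : ℝ} (hA : 0 < A) (hAB : A ≤ B) :
    ∃ μ > 0, MonotoneOn (fun x => deriv H x - μ * x) (Icc A B) := by
  have hpos : Icc A B ⊆ Ioi 0 := fun x hx => hA.trans_le hx.1
  have hcont : ContinuousOn (fun x => deriv p x / x) (Icc A B) :=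
    (((hp.mono Ioi_subset_Ici_self).continuousOn_deriv_of_isOpen isOpen_Ioi le_rfl).div
      continuousOn_id fun x hx => ne_of_gt hx).mono hpos
  obtain ⟨x₀, hx₀, hmin⟩ := isCompact_Icc.exists_isMinOn (nonempty_Icc.2 hAB) hcont
  set μ := deriv p x₀ / x₀
  have hd : ∀ x ∈ Icc A B, HasDerivAt (fun x => deriv H x - μ * x) (deriv p x / x - μ) x :=
    fun x hx => by
      simpa using (hasDerivAt_deriv_helmholtz hp hH (hpos hx)).fun_sub
        ((hasDerivAt_id x).const_mul μ)
  refine ⟨μ, div_pos (hp' x₀ (hpos hx₀)) (hpos hx₀),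
    monotoneOn_of_deriv_nonneg (convex_Icc A B)
    (fun x hx => (hd x hx).continuousAt.continuousWithinAt)
    (fun x hx => (hd x (interior_subset hx)).differentiableAt.differentiableWithinAt) ?_⟩
  intro x hx
  rw [(hd x (interior_subset hx)).deriv, sub_nonneg]
  exact hmin (interior_subset hx)

theorem exists_pos_mul_le_relEnergy_helmholtz_of_lt (hp : ContDiffOn ℝ 1 p (Ici 0))
    (hp0 : p 0 = 0) (hp' : ∀ ϱ > (0 : ℝ), 0 < deriv p ϱ)
    (hH : ∀ ϱ > (0 : ℝ), H ϱ = ϱ * ∫ z in (1 : ℝ)..ϱ, p z / z ^ 2) (hH0 : H 0 = 0)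
    {y e : ℝ} (hy : 0 < y) (he : 0 < e) :
    ∃ c > 0, ∀ r x, y ≤ r → e ≤ relEnergy H r y → 0 ≤ x → x < y →
      c * (1 + x + p x) ≤ relEnergy H r x := by
  have hpmono := (strictMonoOn_Ici_of_deriv_pos hp.continuousOn hp').monotoneOn
  have hpy : 0 ≤ p y := nonneg_of_map_zero_of_deriv_pos hp.continuousOn hp0 hp' hy.le
  refine ⟨e / (1 + y + p y), by positivity, fun r x hyr hey hx hxy => ?_⟩
  have hE : relEnergy H r y ≤ relEnergy H r x := by
    have hsplit := relEnergy_add_mul_le_relEnergy_helmholtz hp hp0 hp' hH hH0 r hy hx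
    have hH' := (strictMonoOn_deriv_helmholtz hp hp' hH).monotoneOn hy (hy.trans_le hyr) hyr
    nlinarith
  have hpx : 1 + x + p x ≤ 1 + y + p y := by
    linarith [hpmono (mem_Ici.2 hx) (mem_Ici.2 hy.le) hxy.le]
  calc e / (1 + y + p y) * (1 + x + p x) ≤ e / (1 + y + p y) * (1 + y + p y) := by gcongr
    _ = e := div_mul_cancel₀ e (by positivity)
    _ ≤ relEnergy H r x := hey.trans hE

theorem exists_pos_mul_one_add_le_relEnergy_helmholtz (hp : ContDiffOn ℝ 1 p (Ici 0))
    (hp0 : p 0 = 0) (hp' : ∀ ϱ > (0 : ℝ), 0 < deriv p ϱ)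
    (hH : ∀ ϱ > (0 : ℝ), H ϱ = ϱ * ∫ z in (1 : ℝ)..ϱ, p z / z ^ 2) (hH0 : H 0 = 0)
    {b y e : ℝ} (hb : 0 < b) (hby : b < y) (he : 0 < e) :
    ∃ α > 0, ∀ r x, 0 < r → r ≤ b → e ≤ relEnergy H r y → y ≤ x →
      α * (1 + x) ≤ relEnergy H r x := by
  have hy : 0 < y := hb.trans hby
  have hmono := strictMonoOn_deriv_helmholtz hp hp' hH
  set δ := deriv H y - deriv H b
  have hδ : 0 < δ := sub_pos.2 (hmono hb hy hby)
  refine ⟨min e δ / (1 + y), by positivity, fun r x hr hrb hey hyx => ?_⟩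
  have hslope : min e δ / (1 + y) ≤ deriv H y - deriv H r := calc
    min e δ / (1 + y) ≤ min e δ := div_le_self (by positivity) (by linarith)
    _ ≤ δ := min_le_right e δ
    _ ≤ deriv H y - deriv H r := sub_le_sub_left (hmono.monotoneOn hr hb hrb) _
  calc min e δ / (1 + y) * (1 + x)
      = min e δ + min e δ / (1 + y) * (x - y) := by field_simp; ring
    _ ≤ relEnergy H r y + (deriv H y - deriv H r) * (x - y) := by
        gcongr
        exact (min_le_left e δ).trans hey
    _ ≤ relEnergy H r x :=
        relEnergy_add_mul_le_relEnergy_helmholtz hp hp0 hp' hH hH0 r hy (hy.le.trans hyx)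

theorem le_div_add_mul_one_add_of_convexOn (hp : ContDiffOn ℝ 1 p (Ici 0)) (hp0 : p 0 = 0)
    (hp' : ∀ ϱ > (0 : ℝ), 0 < deriv p ϱ)
    (hH : ∀ ϱ > (0 : ℝ), H ϱ = ϱ * ∫ z in (1 : ℝ)..ϱ, p z / z ^ 2) (hH0 : H 0 = 0)
    {a' : ℝ} (ha' : 0 < a') (hconv : ConvexOn ℝ (Ici 0) (fun ϱ => H ϱ - a' * p ϱ))
    {r b x : ℝ} (hr : 0 < r) (hrb : r ≤ b) (hbx : b ≤ x) :
    p x ≤ relEnergy H r x / a' + (p b + deriv p b) * (1 + x) := by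
  have hb : 0 < b := hr.trans_le hrb
  have hpb := nonneg_of_map_zero_of_deriv_pos hp.continuousOn hp0 hp' hb.le
  have hp'b := hp' b hb
  have hpd : DifferentiableAt ℝ p b :=
    (hp.differentiableOn one_ne_zero b hb.le).differentiableAt (Ici_mem_nhds hb)
  have hHd : DifferentiableAt ℝ H b :=
    (hasDerivAt_helmholtz (hp.continuousOn.mono Ioi_subset_Ici_self) hH hb).differentiableAt
  have hE : relEnergy p b x ≤ relEnergy H r x / a' := by
    rw [le_div_iff₀' ha']
    exact (hconv.mul_relEnergy_le (mem_Ici.2 hb.le) (mem_Ici.2 (hb.le.trans hbx)) hHd hpd).trans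
      (relEnergy_helmholtz_le_of_le hp hp0 hp' hH hH0 hr hrb hbx)
  rw [relEnergy] at hE
  nlinarith

theorem exists_pos_mul_le_relEnergy_helmholtz_of_gt (hp : ContDiffOn ℝ 1 p (Ici 0))
    (hp0 : p 0 = 0) (hp' : ∀ ϱ > (0 : ℝ), 0 < deriv p ϱ)
    (hH : ∀ ϱ > (0 : ℝ), H ϱ = ϱ * ∫ z in (1 : ℝ)..ϱ, p z / z ^ 2) (hH0 : H 0 = 0)
    {a' : ℝ} (ha' : 0 < a') (hconv : ConvexOn ℝ (Ici 0) (fun ϱ => H ϱ - a' * p ϱ))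
    {b y e : ℝ} (hb : 0 < b) (hby : b < y) (he : 0 < e) :
    ∃ c > 0, ∀ r x, 0 < r → r ≤ b → e ≤ relEnergy H r y → y < x →
      c * (1 + x + p x) ≤ relEnergy H r x := by
  obtain ⟨α, hα, hlin⟩ :=
    exists_pos_mul_one_add_le_relEnergy_helmholtz hp hp0 hp' hH hH0 hb hby he
  set K := p b + deriv p b
  have hK : 0 ≤ K :=
    add_nonneg (nonneg_of_map_zero_of_deriv_pos hp.continuousOn hp0 hp' hb.le) (hp' b hb).le
  set C := (1 + K) / α + 1 / a'
  refine ⟨C⁻¹, by positivity, fun r x hr hrb hey hyx => ?_⟩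
  set E := relEnergy H r x
  have h1x : 1 + x ≤ E / α := (le_div_iff₀' hα).2 (hlin r x hr hrb hey hyx.le)
  have hpx : p x ≤ E / a' + K * (1 + x) :=
    le_div_add_mul_one_add_of_convexOn hp hp0 hp' hH hH0 ha' hconv hr hrb (hby.le.trans hyx.le)
  have hKx : K * (1 + x) ≤ K * (E / α) := mul_le_mul_of_nonneg_left h1x hK
  calc C⁻¹ * (1 + x + p x) ≤ C⁻¹ * (C * E) := by
        gcongr
        calc 1 + x + p x ≤ E / α + (E / a' + K * (E / α)) := by linarith
          _ = C * E := by ring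
    _ = E := inv_mul_cancel_left₀ (by positivity) E

end Helmholtz

theorem relative_energy_lower_bound_general (p H : ℝ → ℝ)
    (hp : ContDiffOn ℝ 1 p (Set.Ici 0)) (hp0 : p 0 = 0)
    (hp' : ∀ ϱ > (0 : ℝ), 0 < deriv p ϱ)
    (hH : ∀ ϱ > (0 : ℝ), H ϱ = ϱ * ∫ z in (1 : ℝ)..ϱ, p z / z ^ 2) (hH0 : H 0 = 0)
    (a' : ℝ) (ha' : 0 < a')
    (hconv₁ : ConvexOn ℝ (Set.Ici 0) (fun ϱ => H ϱ - a' * p ϱ)) :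
    ∀ a b : ℝ, 0 < a → a < b →
      ∃ c > (0 : ℝ), ∀ ϱ ≥ (0 : ℝ), ∀ r ∈ Set.Icc a b,
        (ϱ ∉ Set.Icc (a / 2) (2 * b) →
          c * (1 + ϱ + p ϱ) ≤ H ϱ - deriv H r * (ϱ - r) - H r) ∧
        (ϱ ∈ Set.Icc (a / 2) (2 * b) →
          c * (ϱ - r) ^ 2 ≤ H ϱ - deriv H r * (ϱ - r) - H r) := by
  intro a b ha hab
  have hb : 0 < b := ha.trans hab
  obtain ⟨μ, hμ, hmono⟩ := exists_pos_monotoneOn_deriv_helmholtz_sub hp hp' hH (half_pos ha)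
    (by linarith : a / 2 ≤ 2 * b)
  have hquad : ∀ r ∈ Icc a b, ∀ x ∈ Icc (a / 2) (2 * b),
      μ / 2 * (x - r) ^ 2 ≤ relEnergy H r x :=
    fun r hr x hx => mul_sq_le_relEnergy (convex_Icc _ _)
      (fun s hs => (hasDerivAt_helmholtz (hp.continuousOn.mono Ioi_subset_Ici_self) hH
        (by linarith [hs.1])).differentiableAt)
      hmono ⟨by linarith [hr.1], by linarith [hr.2]⟩ hx
  obtain ⟨cL, hcL, hleft⟩ := exists_pos_mul_le_relEnergy_helmholtz_of_lt hp hp0 hp' hH hH0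
    (half_pos ha) (by positivity : 0 < μ / 2 * (a / 2) ^ 2)
  obtain ⟨cR, hcR, hright⟩ := exists_pos_mul_le_relEnergy_helmholtz_of_gt hp hp0 hp' hH hH0 ha'
    hconv₁ hb (by linarith : b < 2 * b) (by positivity : 0 < μ / 2 * b ^ 2)
  refine ⟨min (μ / 2) (min cL cR), by positivity, fun ϱ hϱ r hr =>
    ⟨fun hout => ?_, fun hin => ?_⟩⟩
  · have hsize : 0 ≤ 1 + ϱ + p ϱ := by
      linarith [nonneg_of_map_zero_of_deriv_pos hp.continuousOn hp0 hp' hϱ]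
    rcases lt_or_ge ϱ (a / 2) with hlt | hge
    · have hEa : μ / 2 * (a / 2) ^ 2 ≤ relEnergy H r (a / 2) :=
        (hquad r hr (a / 2) ⟨le_rfl, by linarith⟩).trans'
          (mul_le_mul_of_nonneg_left (by nlinarith [hr.1]) (by positivity))
      exact (mul_le_mul_of_nonneg_right ((min_le_right _ _).trans (min_le_left _ _)) hsize).trans
        (hleft r ϱ (by linarith [hr.1]) hEa hϱ hlt)
    · have hgt : 2 * b < ϱ := lt_of_not_ge fun hle => hout ⟨hge, hle⟩
      have hEb : μ / 2 * b ^ 2 ≤ relEnergy H r (2 * b) :=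
        (hquad r hr (2 * b) ⟨by linarith, le_rfl⟩).trans'
          (mul_le_mul_of_nonneg_left (by nlinarith [hr.2]) (by positivity))
      exact (mul_le_mul_of_nonneg_right ((min_le_right _ _).trans (min_le_right _ _)) hsize).trans
        (hright r ϱ (ha.trans_le hr.1) hr.2 hEb hgt)
  · exact (mul_le_mul_of_nonneg_right (min_le_left _ _) (sq_nonneg _)).trans (hquad r hr ϱ hin)

/-- Lower bound on the relative energy `E(ϱ|r) = H(ϱ) − H'(r)(ϱ−r) − H(r)`:
for `r` in a compact set `[a,b] ⊂ (0,∞)` there is `c = c(a,b) > 0` such that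
`E(ϱ|r) ≥ c (1 + ϱ + p(ϱ))` in the residual region `ϱ ∉ [a/2, 2b]` and
`E(ϱ|r) ≥ c (ϱ−r)²` in the essential region `ϱ ∈ [a/2, 2b]`. -/
theorem relative_energy_lower_bound (p H : ℝ → ℝ)
    (hp : ContDiffOn ℝ 1 p (Set.Ici 0)) (hp0 : p 0 = 0)
    (hp' : ∀ ϱ > (0 : ℝ), 0 < deriv p ϱ)
    (hH : ∀ ϱ > (0 : ℝ), H ϱ = ϱ * ∫ z in (1 : ℝ)..ϱ, p z / z ^ 2) (hH0 : H 0 = 0)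
    (a' abar : ℝ) (ha' : 0 < a') (haa : a' < abar)
    (hconv₁ : ConvexOn ℝ (Set.Ici 0) (fun ϱ => H ϱ - a' * p ϱ))
    (hconv₂ : ConvexOn ℝ (Set.Ici 0) (fun ϱ => abar * p ϱ - H ϱ)) :
    ∀ a b : ℝ, 0 < a → a < b →
      ∃ c > (0 : ℝ), ∀ ϱ ≥ (0 : ℝ), ∀ r ∈ Set.Icc a b,
        (ϱ ∉ Set.Icc (a / 2) (2 * b) →
          c * (1 + ϱ + p ϱ) ≤ H ϱ - deriv H r * (ϱ - r) - H r) ∧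
        (ϱ ∈ Set.Icc (a / 2) (2 * b) →
          c * (ϱ - r) ^ 2 ≤ H ϱ - deriv H r * (ϱ - r) - H r) :=
  relative_energy_lower_bound_general p H hp hp0 hp' hH hH0 a' ha' hconv₁
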